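/- In Bienstock's variable gadget (vertices c_{i,1}, c_{i,2}, c_{i,3}, c_{i,4}, t_{i,1}, t_{i,2}, t_{i,3}, t_{i,4}, f_{i,1}, f_{i,2}, f_{i,3}, f_{i,4} with blue edges t_{i,1}c_{i,3}, c_{i,3}f_{i,1}, f_{i,1}c_{i,1}, c_{i,1}t_{i,1}, and the path c_{i,2}t_{i,2}, t_{i,2}t_{i,3}, t_{i,3}t_{i,4}, t_{i,4}c_{i,4}, c_{i,4}f_{i,4}, f_{i,4}f_{i,3}, f_{i,3}f_{i,2}, f_{i,2}c_{i,2}, and red edges f_{i,2}t_{i,1}, t_{i,1}f_{i,3}, f_{i,3}t_{i,3}, t_{i,3}f_{i,1}, f_{i,1}t_{i,2}), any induced path from c_{i,1} to c_{i,3} avoiding red-edge-adjacent conflicts within the gadget and not using c_{i,2}, c_{i,4} is either c_{i,1}–t_{i,1}–c_{i,3} or c_{i,1}–f_{i,1}–c_{i,3}. -/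

import Mathlib

/-! Both neighbours `t_{i,1}`, `f_{i,1}` of `c_{i,1}` are adjacent to `c_{i,3}`. An induced path
must therefore contain the chord from its second vertex to `c_{i,3}`, and in a path an edge
joining the second vertex to the last one can only be the final edge. -/

/-- Bienstock's variable gadget on 12 vertices. Vertex coding (in `Fin 12`):
`c_{i,1} = 0`, `c_{i,2} = 1`, `c_{i,3} = 2`, `c_{i,4} = 3`,
`t_{i,1} = 4`, `t_{i,2} = 5`, `t_{i,3} = 6`, `t_{i,4} = 7`,
`f_{i,1} = 8`, `f_{i,2} = 9`, `f_{i,3} = 10`, `f_{i,4} = 11`. -/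
def variableGadget : SimpleGraph (Fin 12) :=
  SimpleGraph.fromEdgeSet
    {s((4 : Fin 12), 2), s((2 : Fin 12), 8), s((8 : Fin 12), 0), s((0 : Fin 12), 4),
     s((1 : Fin 12), 5), s((5 : Fin 12), 6), s((6 : Fin 12), 7), s((7 : Fin 12), 3),
     s((3 : Fin 12), 11), s((11 : Fin 12), 10), s((10 : Fin 12), 9), s((9 : Fin 12), 1),
     s((9 : Fin 12), 4), s((4 : Fin 12), 10), s((10 : Fin 12), 6), s((6 : Fin 12), 8),
     s((8 : Fin 12), 5)}

namespace SimpleGraph.Walk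

variable {V : Type*} {G : SimpleGraph V}

theorem IsPath.support_eq_pair_of_mem_edges {u v : V} {p : G.Walk u v} (hp : p.IsPath)
    (he : s(u, v) ∈ p.edges) : p.support = [u, v] := by
  cases p with
  | nil => simp at he
  | @cons _ b _ h q =>
    rw [cons_isPath_iff] at hp
    rw [edges_cons, List.mem_cons] at he
    rcases he with he | he
    · obtain rfl : v = b := Sym2.congr_right.mp he
      obtain rfl : q = Walk.nil := (isPath_iff_nil.mp hp.1).eq_nil
      rfl
    · exact absurd (q.fst_mem_support_of_mem_edges he) hp.2

theorem IsPath.support_eq_triple_of_mem_edges {u b v : V} {h : G.Adj u b} {q : G.Walk b v}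
    (hp : (cons h q).IsPath) (he : s(b, v) ∈ (cons h q).edges) :
    (cons h q).support = [u, b, v] := by
  rw [cons_isPath_iff] at hp
  rw [edges_cons, List.mem_cons, Sym2.eq_swap (a := u), Sym2.congr_right] at he
  rcases he with rfl | he
  · exact absurd q.end_mem_support hp.2
  · rw [support_cons, hp.1.support_eq_pair_of_mem_edges he]

end SimpleGraph.Walk

theorem variableGadget_adj_zero_iff {v : Fin 12} : variableGadget.Adj 0 v ↔ v = 4 ∨ v = 8 := by
  fin_cases v <;> simp [variableGadget]

theorem variableGadget_adj_two_of_adj_zero {v : Fin 12} (h : variableGadget.Adj 0 v) :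
    variableGadget.Adj v 2 := by
  rcases variableGadget_adj_zero_iff.mp h with rfl | rfl <;> simp [variableGadget]

theorem variableGadget_induced_paths_general
    (p : variableGadget.Walk 0 2) (hp : p.IsPath)
    (hind : ∀ x y, x ∈ p.support → y ∈ p.support → variableGadget.Adj x y →
      s(x, y) ∈ p.edges) :
    p.support = [0, 4, 2] ∨ p.support = [0, 8, 2] := by
  cases p with
  | @cons _ b _ h q =>
    have he := hind b 2 (by simp) (SimpleGraph.Walk.end_mem_support _)
      (variableGadget_adj_two_of_adj_zero h)
    rw [hp.support_eq_triple_of_mem_edges he]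
    rcases variableGadget_adj_zero_iff.mp h with rfl | rfl <;> simp

/-- In the variable gadget, any induced path from `c_{i,1}` to `c_{i,3}` avoiding
`c_{i,2}` and `c_{i,4}` is either `c_{i,1}–t_{i,1}–c_{i,3}` or `c_{i,1}–f_{i,1}–c_{i,3}`. -/
theorem variableGadget_induced_paths
    (p : variableGadget.Walk 0 2) (hp : p.IsPath)
    (hind : ∀ x y, x ∈ p.support → y ∈ p.support → variableGadget.Adj x y →
      s(x, y) ∈ p.edges)
    (hc2 : (1 : Fin 12) ∉ p.support) (hc4 : (3 : Fin 12) ∉ p.support) :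
    p.support = [0, 4, 2] ∨ p.support = [0, 8, 2] :=
  variableGadget_induced_paths_general p hp hind
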